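/- Let θ: [0,T] → ℝ^d be square integrable with ‖θ‖_T := (∫₀ᵀ|θ_t|² dt)^{1/2} > 0, let g* ≥ 0, |z_α| ≥ 2‖θ‖_T, and define y*_t = (g*/‖θ‖_T)θ_t. Then the function t ↦ ½‖y*‖²_t + |z_α|‖y*‖_t - ∫₀ᵗ θ_s'y*_s ds is nondecreasing on [0,T], where ‖y*‖_t² = ∫₀ᵗ|y*_s|² ds. -/
import Mathlib


open MeasureTheory RealInnerProductSpace

theorem stmt_12 {d : ℕ} (T : ℝ) (hT : 0 < T)
    (θ : ℝ → EuclideanSpace ℝ (Fin d))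
    (hθint : IntegrableOn (fun t => ‖θ t‖ ^ 2) (Set.Icc 0 T))
    (nθT : ℝ) (hnθT : nθT = Real.sqrt (∫ t in (0:ℝ)..T, ‖θ t‖ ^ 2))
    (hpos : 0 < nθT)
    (gstar zα : ℝ) (hg : 0 ≤ gstar) (hz : 2 * nθT ≤ |zα|)
    (ystar : ℝ → EuclideanSpace ℝ (Fin d))
    (hystar : ∀ t, ystar t = (gstar / nθT) • θ t) :
    MonotoneOn
      (fun t =>
        (1 / 2) * (∫ s in (0:ℝ)..t, ‖ystar s‖ ^ 2)
          + |zα| * Real.sqrt (∫ s in (0:ℝ)..t, ‖ystar s‖ ^ 2)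
          - ∫ s in (0:ℝ)..t, ⟪θ s, ystar s⟫)
      (Set.Icc 0 T) := by
  set c := gstar / nθT with hcdef
  have hc0 : 0 ≤ c := div_nonneg hg hpos.le
  set F : ℝ → ℝ := fun t => ∫ s in (0:ℝ)..t, ‖θ s‖ ^ 2 with hFdef
  have hInt : ∀ x y : ℝ, 0 ≤ x → y ≤ T → x ≤ y →
      IntervalIntegrable (fun t => ‖θ t‖ ^ 2) volume x y := by
    intro x y hx hy hxy
    have h := hθint.mono_set (Set.Icc_subset_Icc hx hy)
    rw [← Set.uIcc_of_le hxy] at h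
    exact h.intervalIntegrable
  have hFmono : ∀ x y : ℝ, 0 ≤ x → x ≤ y → y ≤ T → F x ≤ F y := by
    intro x y hx hxy hy
    have h1 := hInt 0 x le_rfl (hxy.trans hy) hx
    have h2 := hInt x y hx hy hxy
    have hadd := intervalIntegral.integral_add_adjacent_intervals h1 h2
    have hnn : 0 ≤ ∫ s in x..y, ‖θ s‖ ^ 2 :=
      intervalIntegral.integral_nonneg hxy (fun s _ => sq_nonneg _)
    simp only [hFdef]
    linarith [hadd]
  have hF0 : ∀ x : ℝ, 0 ≤ x → x ≤ T → 0 ≤ F x := fun x hx _ =>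
    intervalIntegral.integral_nonneg hx (fun s _ => sq_nonneg _)
  have hy2 : ∀ t : ℝ, (∫ s in (0:ℝ)..t, ‖ystar s‖ ^ 2) = c ^ 2 * F t := by
    intro t
    simp_rw [hystar, norm_smul, mul_pow, Real.norm_eq_abs, sq_abs]
    rw [intervalIntegral.integral_const_mul]
  have hyi : ∀ t : ℝ, (∫ s in (0:ℝ)..t, ⟪θ s, ystar s⟫) = c * F t := by
    intro t
    simp_rw [hystar, real_inner_smul_right, real_inner_self_eq_norm_sq]
    rw [intervalIntegral.integral_const_mul]
  intro a ha b hb hab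
  simp only [hy2, hyi]
  have hFa0 : 0 ≤ F a := hF0 a ha.1 ha.2
  have hFb0 : 0 ≤ F b := hF0 b hb.1 hb.2
  have hFab : F a ≤ F b := hFmono a b ha.1 hab hb.2
  have hFbT : F b ≤ F T := hFmono b T hb.1 hb.2 le_rfl
  set u := Real.sqrt (F a) with hu
  set v := Real.sqrt (F b) with hv
  have hu0 : 0 ≤ u := Real.sqrt_nonneg _
  have hv0 : 0 ≤ v := Real.sqrt_nonneg _
  have huv : u ≤ v := Real.sqrt_le_sqrt hFab
  have hvT : v ≤ nθT := by
    rw [hnθT]; exact Real.sqrt_le_sqrt hFbT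
  have hu2 : u ^ 2 = F a := Real.sq_sqrt hFa0
  have hv2 : v ^ 2 = F b := Real.sq_sqrt hFb0
  have hsa : Real.sqrt (c ^ 2 * F a) = c * u := by
    rw [Real.sqrt_mul (sq_nonneg c), Real.sqrt_sq hc0]
  have hsb : Real.sqrt (c ^ 2 * F b) = c * v := by
    rw [Real.sqrt_mul (sq_nonneg c), Real.sqrt_sq hc0]
  rw [hsa, hsb, ← hu2, ← hv2]
  have key1 : 0 ≤ c ^ 2 / 2 * (v - u) * (v + u) :=
    mul_nonneg (mul_nonneg (by positivity) (by linarith)) (by linarith)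
  have key2 : 0 ≤ c * (v - u) * (|zα| - (u + v)) :=
    mul_nonneg (mul_nonneg hc0 (by linarith)) (by linarith)
  nlinarith [key1, key2]
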